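/- arXiv:1502.02240 — 2 statements merged into one kernel-verified Lean document; each statement's English description precedes it below -/
import Mathlib

section
/- Let G be a group equipped with a proper left-invariant metric. Then the family {F\F'}, where F ≤ F' ranges over all pairs of finite subgroups of G and F\F' carries the quotient pseudometric, has asymptotic dimension zero uniformly. -/
open Matrix

/-- `d` is a pseudometric on `X`. -/
structure IsPseudoMetric {X : Type} (d : X → X → ℝ) : Prop where
  nonneg : ∀ x y, 0 ≤ d x y
  refl : ∀ x, d x x = 0
  symm : ∀ x y, d x y = d y x
  triangle : ∀ x y z, d x z ≤ d x y + d y z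

/-- A (pseudo)metric on a group is left-invariant if left translations are isometries. -/
def IsLeftInvariant {G : Type} [Group G] (d : G → G → ℝ) : Prop :=
  ∀ g x y : G, d (g * x) (g * y) = d x y

/-- A (pseudo)metric is proper if all balls are finite. -/
def IsProper {X : Type} (d : X → X → ℝ) : Prop :=
  ∀ (x : X) (R : ℝ), {y : X | d x y ≤ R}.Finite

/-- The quotient pseudometric on `F\G`, realized as the pseudometric
`d(Fg, Fg') = inf_{f ∈ F} d(f*g, g')` on `G` itself. -/
noncomputable def quotDist {G : Type} [Group G] (d : G → G → ℝ) (F : Subgroup G)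
    (x y : G) : ℝ :=
  ⨅ f : F, d ((f : G) * x) y

/-- A family of (pseudo)metric spaces `{(X i, d i)}` has asymptotic dimension at most `n`
uniformly: for every `r > 0` there is a uniform bound `B` such that every `X i` is covered
by `n+1` collections of subsets, each collection `r`-disjoint, all members of diameter
at most `B`. -/
def UniformAsdimLE {ι : Type} (X : ι → Type) (d : ∀ i, X i → X i → ℝ) (n : ℕ) : Prop :=
  ∀ r : ℝ, 0 < r → ∃ B : ℝ, ∀ i : ι,
    ∃ 𝒰 : Fin (n + 1) → Set (Set (X i)),
      (∀ x : X i, ∃ k, ∃ U ∈ 𝒰 k, x ∈ U) ∧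
      (∀ k, ∀ U ∈ 𝒰 k, ∀ V ∈ 𝒰 k, U ≠ V → ∀ x ∈ U, ∀ y ∈ V, r < d i x y) ∧
      (∀ k, ∀ U ∈ 𝒰 k, ∀ x ∈ U, ∀ y ∈ U, d i x y ≤ B)

/-- A family of (pseudo)metric spaces has finite asymptotic dimension uniformly. -/
def UniformFinAsdim {ι : Type} (X : ι → Type) (d : ∀ i, X i → X i → ℝ) : Prop :=
  ∃ n : ℕ, UniformAsdimLE X d n


/-!
Fix `r > 0` and let `S` be the (finite, by properness) ball of radius `r` about `1`. For finite
`F ≤ F'`, let `K ≤ F'` be the subgroup generated by `S ∩ F'`, and partition `F'` into the double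
cosets `F x K`. If `Fx` and `Fy` are within `r`, then `y = f x b` with `f ∈ F` and
`b = (f x)⁻¹ y ∈ S ∩ F' ⊆ K`, so distinct double cosets are `r`-apart. Conversely `y = f x k`
gives `d(Fx, Fy) ≤ d(f x, f x k) = d(1, k)`. Since `K` is one of the finitely many finite
subgroups generated by subsets of `S`, `d(1, k)` is bounded independently of `F` and `F'`.
-/

theorem uniformAsdimLE_zero_of_setoid {ι : Type} {X : ι → Type} {d : ∀ i, X i → X i → ℝ}
    (h : ∀ r > 0, ∃ B : ℝ, ∀ i, ∃ s : Setoid (X i),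
      (∀ x y, d i x y ≤ r → s x y) ∧ ∀ x y, s x y → d i x y ≤ B) :
    UniformAsdimLE X d 0 := by
  intro r hr
  obtain ⟨B, hB⟩ := h r hr
  refine ⟨B, fun i => ?_⟩
  obtain ⟨s, hclose, hbdd⟩ := hB i
  refine ⟨fun _ => Set.range fun x => {y | s x y}, ?_, ?_, ?_⟩
  · exact fun x => ⟨0, _, ⟨x, rfl⟩, s.refl x⟩
  · rintro - - ⟨a, rfl⟩ - ⟨b, rfl⟩ hab x hax y hby
    by_contra! hxy
    have hab' : s a b := s.trans hax (s.trans (hclose x y hxy) (s.symm hby))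
    exact hab (Set.ext fun z => ⟨s.trans (s.symm hab'), s.trans hab'⟩)
  · rintro - - ⟨a, rfl⟩ x hax y hay
    exact hbdd x y (s.trans (s.symm hax) hay)

theorem exists_forall_mem_finite_closure_le {G : Type} [Group G] {S : Set G} (hS : S.Finite)
    (φ : G → ℝ) :
    ∃ B : ℝ, ∀ T ⊆ S, (Subgroup.closure T : Set G).Finite →
      ∀ k ∈ Subgroup.closure T, φ k ≤ B := by
  have hfin : (⋃ T ∈ {T | T ⊆ S ∧ (Subgroup.closure T : Set G).Finite},
      (Subgroup.closure T : Set G)).Finite :=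
    (hS.finite_subsets.subset fun _ hT => hT.1).biUnion fun _ hT => hT.2
  obtain ⟨B, hB⟩ := (hfin.image φ).bddAbove
  exact ⟨B, fun T hTS hT k hk =>
    hB (Set.mem_image_of_mem φ (Set.mem_biUnion (x := T) ⟨hTS, hT⟩ hk))⟩

section quotDist

variable {G : Type} [Group G] {d : G → G → ℝ}

theorem IsLeftInvariant.apply_eq_one_inv_mul (hli : IsLeftInvariant d) (x y : G) :
    d x y = d 1 (x⁻¹ * y) := by
  rw [← hli x 1, mul_one, mul_inv_cancel_left]

theorem quotDist_le {F : Subgroup G} [Finite F] {f : G} (hf : f ∈ F) (x y : G) :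
    quotDist d F x y ≤ d (f * x) y :=
  ciInf_le (Set.finite_range _).bddBelow (⟨f, hf⟩ : F)

theorem exists_mem_apply_eq_quotDist (F : Subgroup G) [Finite F] (x y : G) :
    ∃ f ∈ F, d (f * x) y = quotDist d F x y :=
  let ⟨f, hf⟩ := exists_eq_ciInf_of_finite (f := fun f : F => d (f * x) y)
  ⟨f, f.2, hf⟩

theorem quotDist_le_of_eq_mul_mul (hli : IsLeftInvariant d) {F : Subgroup G} [Finite F]
    {f x y k : G} (hf : f ∈ F) (hy : y = f * x * k) :
    quotDist d F x y ≤ d 1 k :=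
  (quotDist_le hf x y).trans_eq <| by rw [hli.apply_eq_one_inv_mul, hy, inv_mul_cancel_left]

theorem DoubleCoset.setoid_closure_ball_of_quotDist_le (hli : IsLeftInvariant d)
    {F F' : Subgroup G} [Finite F] (hFF' : F ≤ F') {r : ℝ} {x y : G} (hx : x ∈ F')
    (hy : y ∈ F') (h : quotDist d F x y ≤ r) :
    DoubleCoset.setoid F (Subgroup.closure ({g | d 1 g ≤ r} ∩ F')) x y := by
  obtain ⟨f, hf, hfxy⟩ := exists_mem_apply_eq_quotDist (d := d) F x y
  have hball : d 1 ((f * x)⁻¹ * y) ≤ r := by rwa [← hli.apply_eq_one_inv_mul, hfxy]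
  have hF' : (f * x)⁻¹ * y ∈ F' := F'.mul_mem (F'.inv_mem (F'.mul_mem (hFF' hf) hx)) hy
  exact DoubleCoset.rel_iff.2
    ⟨f, hf, _, Subgroup.subset_closure ⟨hball, hF'⟩, by rw [mul_inv_cancel_left]⟩

end quotDist

theorem pairs_finite_subgroups_quotients_asdim_zero_general
    (G : Type) [Group G] (d : G → G → ℝ)
    (hli : IsLeftInvariant d) (hp : IsProper d) :
    UniformAsdimLE
      (fun P : {P : Subgroup G × Subgroup G // P.1 ≤ P.2 ∧ (P.2 : Set G).Finite} => ↥P.1.2)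
      (fun P x y => ⨅ f : ↥P.1.1, d ((f : G) * (x : G)) (y : G)) 0 := by
  refine uniformAsdimLE_zero_of_setoid fun r _ => ?_
  obtain ⟨B, hB⟩ := exists_forall_mem_finite_closure_le (hp 1 r) (d 1)
  refine ⟨B, ?_⟩
  rintro ⟨⟨F, F'⟩, hFF', hF'⟩
  have : Finite F := (hF'.subset hFF').to_subtype
  let K := Subgroup.closure ({g | d 1 g ≤ r} ∩ (F' : Set G))
  have hK : (K : Set G).Finite := hF'.subset ((Subgroup.closure_le F').2 Set.inter_subset_right)
  refine ⟨(DoubleCoset.setoid F K).comap Subtype.val, fun x y h =>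
    DoubleCoset.setoid_closure_ball_of_quotDist_le hli hFF' x.2 y.2 h, fun x y h => ?_⟩
  obtain ⟨f, hf, k, hk, hy⟩ := DoubleCoset.rel_iff.1 h
  exact (quotDist_le_of_eq_mul_mul hli hf hy).trans (hB _ Set.inter_subset_left hK k hk)

/-- Let `G` be a group with a proper left-invariant metric. Then the
family `{F\F'}`, where `F ≤ F'` ranges over all pairs of finite subgroups of `G` and
`F\F'` carries the quotient pseudometric, has asymptotic dimension zero uniformly. -/
theorem pairs_finite_subgroups_quotients_asdim_zero
    (G : Type) [Group G] (d : G → G → ℝ)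
    (hm : IsPseudoMetric d) (hsep : ∀ x y, d x y = 0 → x = y)
    (hli : IsLeftInvariant d) (hp : IsProper d) :
    UniformAsdimLE
      (fun P : {P : Subgroup G × Subgroup G // P.1 ≤ P.2 ∧ (P.2 : Set G).Finite} => ↥P.1.2)
      (fun P x y => ⨅ f : ↥P.1.1, d ((f : G) * (x : G)) (y : G)) 0 :=
  pairs_finite_subgroups_quotients_asdim_zero_general G d hli hp
end

section
/- Let n ∈ ℕ and let {X_{i,j}}_{j∈J, 0≤i≤n} be a metric family such that for each j ∈ J the spaces X_{0,j}, …, X_{n,j} are subspaces of a common metric space. Then the metric family {⋃_{i=0}^n X_{i,j}}_{j∈J} has finite decomposition complexity if and only if the family {X_{i,j}}_{j∈J, 0≤i≤n} has finite decomposition complexity. -/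
open Matrix

/-- A metric family: a family of (pseudo)metric spaces. -/
structure MetricFamily : Type 1 where
  idx : Type
  spc : idx → Type
  dist : ∀ i, spc i → spc i → ℝ

/-- Given for each member `spc i` of a family a collection `𝒰 i` of subsets (pieces),
the family of all these pieces with their induced metrics. -/
def MetricFamily.ofPieces (F : MetricFamily) (𝒰 : ∀ i, Set (Set (F.spc i))) :
    MetricFamily where
  idx := Σ i, ↥(𝒰 i)
  spc := fun q => ↥(q.2.1)
  dist := fun q x y => F.dist q.1 x.1 y.1

/-- A metric family is bounded if its members have uniformly bounded diameter. -/
def MetricFamily.Bounded (F : MetricFamily) : Prop :=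
  ∃ B : ℝ, ∀ i x y, F.dist i x y ≤ B

/-- A collection of subsets is `r`-disjoint if distinct members are at distance `> r`. -/
def RDisjointCollection {X : Type} (d : X → X → ℝ) (r : ℝ) (𝒰 : Set (Set X)) : Prop :=
  ∀ U ∈ 𝒰, ∀ V ∈ 𝒰, U ≠ V → ∀ x ∈ U, ∀ y ∈ V, r < d x y

/-- A metric family decomposes over a class `D` of metric families if for every `r > 0`
each member splits as a union `U ∪ V`, each of `U`, `V` being an `r`-disjoint union of
pieces, such that the two resulting families of pieces lie in `D`. -/
def MetricFamily.DecomposesOver (F : MetricFamily) (D : MetricFamily → Prop) : Prop :=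
  ∀ r : ℝ, 0 < r → ∃ 𝒰 𝒱 : ∀ i, Set (Set (F.spc i)),
    (∀ i (x : F.spc i), (∃ S ∈ 𝒰 i, x ∈ S) ∨ (∃ S ∈ 𝒱 i, x ∈ S)) ∧
    (∀ i, RDisjointCollection (F.dist i) r (𝒰 i)) ∧
    (∀ i, RDisjointCollection (F.dist i) r (𝒱 i)) ∧
    D (F.ofPieces 𝒰) ∧ D (F.ofPieces 𝒱)

/-- The hierarchy `𝔇_γ`: `𝔇_0` = bounded families, `𝔇_{γ+1}` = families decomposing over
`𝔇_γ`, and unions at limit ordinals. -/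
noncomputable def FDCClass (γ : Ordinal.{0}) : MetricFamily → Prop :=
  Ordinal.limitRecOn γ MetricFamily.Bounded
    (fun _ D F => F.DecomposesOver D)
    (fun o _ D F => ∃ β, ∃ h : β < o, D β h F)

/-- A metric family has finite decomposition complexity if it lies in `𝔇_γ` for some
ordinal `γ`. -/
def HasFDC (F : MetricFamily) : Prop := ∃ γ : Ordinal.{0}, FDCClass γ F

/-- The metric family `{F\G}_{F ∈ Fin}` of quotients of `G` by all its finite subgroups,
each quotient realized as `G` with the quotient pseudometric. -/
noncomputable def quotFamily (G : Type) [Group G] (d : G → G → ℝ) : MetricFamily where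
  idx := {F : Subgroup G // (F : Set G).Finite}
  spc := fun _ => G
  dist := fun F x y => quotDist d F.1 x y

/-!
Each `X_{i,j}` sits isometrically inside `⋃ i, X_{i,j}`, and every class `𝔇_γ` is closed under
passing to families that embed isometrically, which gives one direction. Conversely, a cover of
each member by two subsets is already a decomposition, since a single set is an `r`-disjoint
collection for every `r`; as the classes `𝔇_γ` increase with `γ`, the two halves may be taken in a
common class. Induction on the number of pieces then shows that finite unions preserve FDC.
-/

def MetricFamily.Embeds (F' F : MetricFamily) : Prop :=
  ∀ i' : F'.idx, ∃ i : F.idx, ∃ f : F'.spc i' → F.spc i,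
    ∀ x y, F.dist i (f x) (f y) = F'.dist i' x y

def MetricFamily.restrict (F : MetricFamily) (A : ∀ i, Set (F.spc i)) : MetricFamily where
  idx := F.idx
  spc := fun i => ↥(A i)
  dist := fun i x y => F.dist i x.1 y.1

lemma FDCClass_zero (F : MetricFamily) : FDCClass 0 F ↔ F.Bounded := by
  unfold FDCClass
  rw [Ordinal.limitRecOn_zero]

lemma FDCClass_add_one (γ : Ordinal) (F : MetricFamily) :
    FDCClass (γ + 1) F ↔ F.DecomposesOver (FDCClass γ) := by
  unfold FDCClass
  rw [Ordinal.limitRecOn_add_one]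

lemma FDCClass_limit {γ : Ordinal} (hγ : Order.IsSuccLimit γ) (F : MetricFamily) :
    FDCClass γ F ↔ ∃ β, ∃ _ : β < γ, FDCClass β F := by
  unfold FDCClass
  rw [Ordinal.limitRecOn_limit _ _ _ _ hγ]

section RDisjointCollection

variable {X : Type} {d : X → X → ℝ} {r : ℝ}

lemma rDisjointCollection_empty : RDisjointCollection d r ∅ := by
  intro U hU
  exact absurd hU (Set.notMem_empty U)

lemma rDisjointCollection_singleton (A : Set X) : RDisjointCollection d r {A} := by
  rintro U rfl V rfl hne
  exact absurd rfl hne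

lemma RDisjointCollection.preimage {Y : Type} {dY : Y → Y → ℝ} {𝒰 : Set (Set X)} (f : Y → X)
    (hf : ∀ x y, d (f x) (f y) = dY x y) (h : RDisjointCollection d r 𝒰) :
    RDisjointCollection dY r ((f ⁻¹' ·) '' 𝒰) := by
  rintro _ ⟨U, hU, rfl⟩ _ ⟨V, hV, rfl⟩ hne x hx y hy
  rw [← hf x y]
  exact h U hU V hV (fun hUV => hne (by rw [hUV])) _ hx _ hy

end RDisjointCollection

namespace MetricFamily

lemma DecomposesOver.mono {F : MetricFamily} {D D' : MetricFamily → Prop}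
    (hD : ∀ P, D P → D' P) (h : F.DecomposesOver D) : F.DecomposesOver D' := by
  intro r hr
  obtain ⟨𝒰, 𝒱, hcov, h𝒰, h𝒱, hD𝒰, hD𝒱⟩ := h r hr
  exact ⟨𝒰, 𝒱, hcov, h𝒰, h𝒱, hD _ hD𝒰, hD _ hD𝒱⟩

lemma DecomposesOver.of_embeds {F F' : MetricFamily} {D : MetricFamily → Prop}
    (hD : ∀ P P', P'.Embeds P → D P → D P') (hE : F'.Embeds F) (h : F.DecomposesOver D) :
    F'.DecomposesOver D := by
  choose ι f hf using hE
  have pieces_embed : ∀ 𝒰 : ∀ i, Set (Set (F.spc i)),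
      (F'.ofPieces fun i' => (f i' ⁻¹' ·) '' 𝒰 (ι i')).Embeds (F.ofPieces 𝒰) := by
    rintro 𝒰 ⟨i', _, ⟨U, hU, rfl⟩⟩
    exact ⟨⟨ι i', ⟨U, hU⟩⟩, fun x => ⟨f i' x.1, x.2⟩, fun x y => hf i' x.1 y.1⟩
  intro r hr
  obtain ⟨𝒰, 𝒱, hcov, h𝒰, h𝒱, hD𝒰, hD𝒱⟩ := h r hr
  refine ⟨fun i' => (f i' ⁻¹' ·) '' 𝒰 (ι i'), fun i' => (f i' ⁻¹' ·) '' 𝒱 (ι i'), fun i' x => ?_,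
    fun i' => (h𝒰 (ι i')).preimage (f i') (hf i'), fun i' => (h𝒱 (ι i')).preimage (f i') (hf i'),
    hD _ _ (pieces_embed 𝒰) hD𝒰, hD _ _ (pieces_embed 𝒱) hD𝒱⟩
  rcases hcov (ι i') (f i' x) with ⟨S, hS, hx⟩ | ⟨S, hS, hx⟩
  · exact Or.inl ⟨_, Set.mem_image_of_mem _ hS, hx⟩
  · exact Or.inr ⟨_, Set.mem_image_of_mem _ hS, hx⟩

lemma embeds_ofPieces_singleton (F : MetricFamily) (A : ∀ i, Set (F.spc i)) :
    (F.ofPieces fun i => {A i}).Embeds (F.restrict A) := by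
  rintro ⟨i, _, rfl⟩
  exact ⟨i, id, fun _ _ => rfl⟩

end MetricFamily

open MetricFamily

lemma FDCClass.of_embeds {γ : Ordinal} {F F' : MetricFamily} (hE : F'.Embeds F)
    (h : FDCClass γ F) : FDCClass γ F' := by
  induction γ using Ordinal.limitRecOn generalizing F F' with
  | zero =>
    rw [FDCClass_zero] at h ⊢
    obtain ⟨B, hB⟩ := h
    choose ι f hf using hE
    exact ⟨B, fun i x y => hf i x y ▸ hB (ι i) (f i x) (f i y)⟩
  | add_one β ih =>
    rw [FDCClass_add_one] at h ⊢
    exact h.of_embeds (fun _ _ => ih) hE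
  | limit γ hγ ih =>
    rw [FDCClass_limit hγ] at h ⊢
    obtain ⟨β, hβ, h⟩ := h
    exact ⟨β, hβ, ih β hβ hE h⟩

lemma HasFDC.of_embeds {F F' : MetricFamily} (h : HasFDC F) (hE : F'.Embeds F) : HasFDC F' :=
  let ⟨γ, hγ⟩ := h
  ⟨γ, hγ.of_embeds hE⟩

lemma FDCClass.decomposesOver {γ : Ordinal} {F : MetricFamily} (h : FDCClass γ F) :
    F.DecomposesOver (FDCClass γ) := by
  induction γ using Ordinal.limitRecOn generalizing F with
  | zero =>
    rw [FDCClass_zero] at h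
    obtain ⟨B, hB⟩ := h
    intro r _
    refine ⟨fun _ => {Set.univ}, fun _ => ∅, fun _ x => Or.inl ⟨Set.univ, rfl, trivial⟩,
      fun _ => rDisjointCollection_singleton _, fun _ => rDisjointCollection_empty, ?_, ?_⟩
    · exact (FDCClass_zero _).2 ⟨B, fun q x y => hB q.1 x.1 y.1⟩
    · exact (FDCClass_zero _).2 ⟨0, fun q => absurd q.2.2 (Set.notMem_empty _)⟩
  | add_one β ih =>
    rw [FDCClass_add_one] at h
    exact h.mono fun _ hP => (FDCClass_add_one β _).2 (ih hP)
  | limit γ hγ ih =>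
    rw [FDCClass_limit hγ] at h
    obtain ⟨β, hβ, h⟩ := h
    exact (ih β hβ h).mono fun P hP => (FDCClass_limit hγ P).2 ⟨β, hβ, hP⟩

lemma FDCClass.mono {γ δ : Ordinal} {F : MetricFamily} (hγδ : γ ≤ δ) (h : FDCClass γ F) :
    FDCClass δ F := by
  induction δ using Ordinal.limitRecOn with
  | zero => rwa [nonpos_iff_eq_zero.1 hγδ] at h
  | add_one δ ih =>
    rcases Order.le_succ_iff_eq_or_le.1 hγδ with rfl | hγδ
    · exact h
    · exact (FDCClass_add_one δ F).2 (ih hγδ).decomposesOver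
  | limit δ hδ ih =>
    rcases hγδ.eq_or_lt with rfl | hγδ
    · exact h
    · exact (FDCClass_limit hδ F).2 ⟨γ, hγδ, h⟩

lemma hasFDC_of_cover (F : MetricFamily) (A B : ∀ i, Set (F.spc i))
    (hcov : ∀ i x, x ∈ A i ∨ x ∈ B i) (hA : HasFDC (F.restrict A)) (hB : HasFDC (F.restrict B)) :
    HasFDC F := by
  obtain ⟨γ, hγ⟩ := hA.of_embeds (embeds_ofPieces_singleton F A)
  obtain ⟨δ, hδ⟩ := hB.of_embeds (embeds_ofPieces_singleton F B)
  refine ⟨max γ δ + 1, (FDCClass_add_one _ F).2 fun r _ => ?_⟩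
  refine ⟨fun i => {A i}, fun i => {B i}, fun i x => ?_, fun _ => rDisjointCollection_singleton _,
    fun _ => rDisjointCollection_singleton _, hγ.mono (le_max_left γ δ),
    hδ.mono (le_max_right γ δ)⟩
  exact (hcov i x).imp (⟨A i, rfl, ·⟩) (⟨B i, rfl, ·⟩)

section Unions

variable {J ι : Type} {Z : J → Type} (dZ : ∀ j, Z j → Z j → ℝ) (T : ∀ j, ι → Set (Z j))

lemma hasFDC_of_hasFDC_iUnion
    (h : HasFDC ⟨J, fun j => ↥(⋃ i, T j i), fun j x y => dZ j x.1 y.1⟩) :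
    HasFDC ⟨J × ι, fun p => ↥(T p.1 p.2), fun p x y => dZ p.1 x.1 y.1⟩ :=
  h.of_embeds fun p => ⟨p.1, fun x => ⟨x.1, Set.mem_iUnion.2 ⟨p.2, x.2⟩⟩, fun _ _ => rfl⟩

lemma hasFDC_biUnion (h : HasFDC ⟨J × ι, fun p => ↥(T p.1 p.2), fun p x y => dZ p.1 x.1 y.1⟩)
    (s : Finset ι) : HasFDC ⟨J, fun j => ↥(⋃ i ∈ s, T j i), fun j x y => dZ j x.1 y.1⟩ := by
  classical
  induction s using Finset.induction_on with
  | empty =>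
    exact ⟨0, (FDCClass_zero _).2 ⟨0, fun j x => absurd x.2 (by simp)⟩⟩
  | insert a s _ ih =>
    refine hasFDC_of_cover _ (fun j => {x | x.1 ∈ T j a}) (fun j => {x | x.1 ∈ ⋃ i ∈ s, T j i})
      (fun j x => ?_) ?_ ?_
    · simpa only [Finset.set_biUnion_insert, Set.mem_union, Set.mem_ofPred_eq] using x.2
    · exact h.of_embeds fun j => ⟨(j, a), fun x => ⟨x.1.1, x.2⟩, fun _ _ => rfl⟩
    · exact ih.of_embeds fun j => ⟨j, fun x => ⟨x.1.1, x.2⟩, fun _ _ => rfl⟩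

lemma hasFDC_iUnion [Finite ι]
    (h : HasFDC ⟨J × ι, fun p => ↥(T p.1 p.2), fun p x y => dZ p.1 x.1 y.1⟩) :
    HasFDC ⟨J, fun j => ↥(⋃ i, T j i), fun j x y => dZ j x.1 y.1⟩ := by
  have := Fintype.ofFinite ι
  refine (hasFDC_biUnion dZ T h Finset.univ).of_embeds
    fun j => ⟨j, fun x => ⟨x.1, ?_⟩, fun _ _ => rfl⟩
  simpa only [Finset.mem_univ, Set.iUnion_true] using x.2

end Unions

theorem hasFDC_finite_union_iff_general
    (J : Type) (n : ℕ) (Z : J → Type) (dZ : ∀ j, Z j → Z j → ℝ)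
    (S : ∀ j, Fin (n + 1) → Set (Z j)) :
    HasFDC ⟨J, fun j => ↥(⋃ i, S j i), fun j x y => dZ j x.1 y.1⟩ ↔
      HasFDC ⟨J × Fin (n + 1), fun p => ↥(S p.1 p.2), fun p x y => dZ p.1 x.1 y.1⟩ :=
  ⟨hasFDC_of_hasFDC_iUnion dZ S, hasFDC_iUnion dZ S⟩

/-- Let `{X_{i,j}}_{j ∈ J, 0 ≤ i ≤ n}` be a metric family such that for
each `j` the spaces `X_{0,j}, …, X_{n,j}` are subspaces of a common metric space. Then
the family `{⋃_{i=0}^n X_{i,j}}_{j ∈ J}` has finite decomposition complexity if and only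
if the family `{X_{i,j}}_{j ∈ J, 0 ≤ i ≤ n}` does. -/
theorem hasFDC_finite_union_iff
    (J : Type) (n : ℕ) (Z : J → Type) (dZ : ∀ j, Z j → Z j → ℝ)
    (hZ : ∀ j, IsPseudoMetric (dZ j)) (S : ∀ j, Fin (n + 1) → Set (Z j)) :
    HasFDC ⟨J, fun j => ↥(⋃ i, S j i), fun j x y => dZ j x.1 y.1⟩ ↔
      HasFDC ⟨J × Fin (n + 1), fun p => ↥(S p.1 p.2), fun p x y => dZ p.1 x.1 y.1⟩ :=
  hasFDC_finite_union_iff_general J n Z dZ S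
end
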